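/- arXiv:1603.03092 — 2 statements merged into one kernel-verified Lean document; each statement's English description precedes it below -/
import Mathlib

section
/- In the deductive system D≅ of first-order logic with isomorphism, the 'substitution salva veritate' sequent is derivable: for any formula φ in context Γ, x : K, the sequent Γ, x : K, y : K | (x ≅ y) ∧ φ ⇒ φ[y/x] is derivable. -/
/-! The deductive system `D≅` of first-order logic with isomorphism, over a
FOL≅-signature with a base sort `K` and a dependent sort `A` over `K` (via a
top-level arrow), completed with the logical sorts: isomorphism sorts
`x ≅_K y` and `a ≅_A b`, reflexivity predicates `ρ`, and the transport
structure `τ(p, α, β)` relating `α : A(x,w)` and `β : A(y,w)` along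
`p : x ≅_K y`. -/

abbrev Var := ℕ

inductive Srt where
  | K : Srt                       -- the base sort
  | A (x : Var) : Srt             -- the dependent sort A(x, w)
  | iso (x y : Var) : Srt         -- x ≅_K y
  | isoA (a b : Var) : Srt        -- a ≅_A b
  | rho (x q : Var) : Srt         -- ρ(q) for q : x ≅_K x
  | rhoA (a q : Var) : Srt        -- ρ(q) for q : a ≅_A a
  | tau (p a b : Var) : Srt       -- τ(p, α, β)

inductive Fml where
  | bot | top
  | and (φ ψ : Fml)
  | or (φ ψ : Fml)
  | imp (φ ψ : Fml)
  | all (x : Var) (s : Srt) (φ : Fml)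
  | ex (x : Var) (s : Srt) (φ : Fml)

abbrev Ctx := List (Var × Srt)

def varsCon (Γ : Ctx) : List Var := Γ.map Prod.fst

def substS (σ : Var → Var) : Srt → Srt
  | .K => .K
  | .A x => .A (σ x)
  | .iso x y => .iso (σ x) (σ y)
  | .isoA a b => .isoA (σ a) (σ b)
  | .rho x q => .rho (σ x) (σ q)
  | .rhoA a q => .rhoA (σ a) (σ q)
  | .tau p a b => .tau (σ p) (σ a) (σ b)

def substF (σ : Var → Var) : Fml → Fml
  | .bot => .bot
  | .top => .top
  | .and φ ψ => .and (substF σ φ) (substF σ ψ)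
  | .or φ ψ => .or (substF σ φ) (substF σ ψ)
  | .imp φ ψ => .imp (substF σ φ) (substF σ ψ)
  | .all x s φ => .all x (substS σ s) (substF (Function.update σ x x) φ)
  | .ex x s φ => .ex x (substS σ s) (substF (Function.update σ x x) φ)

/-- `x ≅ y` abbreviates `∃ p : x ≅_K y. ⊤`. -/
def isoF (p x y : Var) : Fml := .ex p (.iso x y) .top
def isoAF (e a b : Var) : Fml := .ex e (.isoA a b) .top
/-- `ρ(q)` abbreviates `∃ r : ρ(q). ⊤`. -/
def rhoF (r x q : Var) : Fml := .ex r (.rho x q) .top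
def rhoAF (r a q : Var) : Fml := .ex r (.rhoA a q) .top
/-- `τ(p, α, β)` abbreviates `∃ t : τ(p, α, β). ⊤`. -/
def tauF (t p a b : Var) : Fml := .ex t (.tau p a b) .top

/-- The contraction substitution `[x, x, q]` along the contraction context
morphism `(Γ, x:K, q : x ≅ x) ⇒ (Γ, x:K, y:K, p : x ≅ y)`. -/
def ctr (y p x q : Var) : Var → Var :=
  fun v => if v = y then x else if v = p then q else v

/-- A context morphism, encoded by its variable assignment. -/
def CtxMor (σ : Var → Var) (Γ Δ : Ctx) : Prop :=
  ∀ d ∈ Δ, (σ d.1, substS σ d.2) ∈ Γ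

/-- The sequent calculus `D≅`: the structural and logical rules of `D_FOLDS`
together with the reflexivity axiom `(ρ)`, the transport-along-reflexivity
axiom `(τρ)` and the path-induction rule `(J)` (instantiated at each
isomorphism sort). A sequent `Γ | φ ⇒ ψ` is written `Deriv Γ φ ψ`. -/
inductive Deriv : Ctx → Fml → Fml → Prop where
  -- structural rules
  | iden {Γ φ} : Deriv Γ φ φ
  | sub {σ Γ Δ φ ψ} : CtxMor σ Γ Δ → Deriv Δ φ ψ →
      Deriv Γ (substF σ φ) (substF σ ψ)
  | cut {Γ φ ψ χ} : Deriv Γ φ ψ → Deriv Γ ψ χ → Deriv Γ φ χ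
  | conWk {Γ φ ψ x s} : Deriv Γ φ ψ → Deriv (Γ ++ [(x, s)]) φ ψ
  | conExch {Γ Γ' φ ψ x s y s'} :
      Deriv (Γ ++ (x, s) :: (y, s') :: Γ') φ ψ →
      Deriv (Γ ++ (y, s') :: (x, s) :: Γ') φ ψ
  -- logical rules
  | top {Γ φ} : Deriv Γ φ .top
  | bot {Γ φ} : Deriv Γ .bot φ
  | exTop {Γ x s φ} : Deriv Γ (.ex x s φ) (.ex x s .top)
  | andI {Γ θ φ ψ} : Deriv Γ θ φ → Deriv Γ θ ψ → Deriv Γ θ (.and φ ψ)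
  | andE1 {Γ θ φ ψ} : Deriv Γ θ (.and φ ψ) → Deriv Γ θ φ
  | andE2 {Γ θ φ ψ} : Deriv Γ θ (.and φ ψ) → Deriv Γ θ ψ
  | orI {Γ θ φ ψ} : Deriv Γ φ θ → Deriv Γ ψ θ → Deriv Γ (.or φ ψ) θ
  | orE1 {Γ θ φ ψ} : Deriv Γ (.or φ ψ) θ → Deriv Γ φ θ
  | orE2 {Γ θ φ ψ} : Deriv Γ (.or φ ψ) θ → Deriv Γ ψ θ
  | impI {Γ θ φ ψ} : Deriv Γ (.and θ φ) ψ → Deriv Γ θ (.imp φ ψ)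
  | impE {Γ θ φ ψ} : Deriv Γ θ (.imp φ ψ) → Deriv Γ (.and θ φ) ψ
  | allI {Γ θ φ x s} : Deriv (Γ ++ [(x, s)]) θ φ → Deriv Γ θ (.all x s φ)
  | allE {Γ θ φ x s} : Deriv Γ θ (.all x s φ) → Deriv (Γ ++ [(x, s)]) θ φ
  | exI {Γ θ φ x s} : Deriv (Γ ++ [(x, s)]) φ θ → Deriv Γ (.ex x s φ) θ
  | exE {Γ θ φ x s} : Deriv Γ (.ex x s φ) θ → Deriv (Γ ++ [(x, s)]) φ θ
  -- (ρ): existence of the reflexivity isomorphism, at each isomorphism sort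
  | rhoK {Γ θ x q r} :
      Deriv (Γ ++ [(x, .K)]) θ (.ex q (.iso x x) (rhoF r x q))
  | rhoA {Γ θ x a q r} :
      Deriv (Γ ++ [(a, .A x)]) θ (.ex q (.isoA a a) (rhoAF r a q))
  -- (τρ): transport along the reflexivity isomorphism does nothing
  | tauRho {Γ θ x a q r t} :
      Deriv (Γ ++ [(x, .K), (a, .A x), (q, .iso x x)])
        (.and (rhoF r x q) θ) (tauF t q a a)
  -- (J): path induction, at each isomorphism sort
  | jK {Γ θ φ x y p q r} :
      Deriv (Γ ++ [(x, .K), (q, .iso x x)])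
        (.and (rhoF r x q) (substF (ctr y p x q) θ)) (substF (ctr y p x q) φ) →
      Deriv (Γ ++ [(x, .K), (y, .K), (p, .iso x y)]) θ φ
  | jA {Γ θ φ x a b e e' r} :
      Deriv (Γ ++ [(a, .A x), (e', .isoA a a)])
        (.and (rhoAF r a e') (substF (ctr b e a e') θ)) (substF (ctr b e a e') φ) →
      Deriv (Γ ++ [(a, .A x), (b, .A x), (e, .isoA a b)]) θ φ

/-- Well-formed sorts in a context. -/
inductive SWf : Ctx → Srt → Prop where
  | K {Γ} : SWf Γ .K
  | A {Γ x} : (x, .K) ∈ Γ → SWf Γ (.A x)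
  | iso {Γ x y} : (x, .K) ∈ Γ → (y, .K) ∈ Γ → SWf Γ (.iso x y)
  | isoA {Γ x a b} : (a, .A x) ∈ Γ → (b, .A x) ∈ Γ → SWf Γ (.isoA a b)
  | rho {Γ x q} : (x, .K) ∈ Γ → (q, .iso x x) ∈ Γ → SWf Γ (.rho x q)
  | rhoA {Γ x a q} : (a, .A x) ∈ Γ → (q, .isoA a a) ∈ Γ → SWf Γ (.rhoA a q)
  | tau {Γ x y p a b} : (p, .iso x y) ∈ Γ → (a, .A x) ∈ Γ → (b, .A y) ∈ Γ →
      SWf Γ (.tau p a b)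

/-- Well-formed formulas in a context. -/
inductive FWf : Ctx → Fml → Prop where
  | bot {Γ} : FWf Γ .bot
  | top {Γ} : FWf Γ .top
  | and {Γ φ ψ} : FWf Γ φ → FWf Γ ψ → FWf Γ (.and φ ψ)
  | or {Γ φ ψ} : FWf Γ φ → FWf Γ ψ → FWf Γ (.or φ ψ)
  | imp {Γ φ ψ} : FWf Γ φ → FWf Γ ψ → FWf Γ (.imp φ ψ)
  | all {Γ x s φ} : SWf Γ s → FWf (Γ ++ [(x, s)]) φ → FWf Γ (.all x s φ)
  | ex {Γ x s φ} : SWf Γ s → FWf (Γ ++ [(x, s)]) φ → FWf Γ (.ex x s φ)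


/-! ### Auxiliary machinery for the proof -/

/-- All variables occurring in a sort. -/
def varsS' : Srt → List Var
  | .K => []
  | .A x => [x]
  | .iso x y => [x, y]
  | .isoA a b => [a, b]
  | .rho x q => [x, q]
  | .rhoA a q => [a, q]
  | .tau p a b => [p, a, b]

/-- All variables occurring in a formula (including binders). -/
def varsF' : Fml → List Var
  | .bot => []
  | .top => []
  | .and φ ψ => varsF' φ ++ varsF' ψ
  | .or φ ψ => varsF' φ ++ varsF' ψ
  | .imp φ ψ => varsF' φ ++ varsF' ψ
  | .all x s φ => x :: (varsS' s ++ varsF' φ)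
  | .ex x s φ => x :: (varsS' s ++ varsF' φ)

/-- All variables occurring in a context (names and sorts). -/
def varsC : Ctx → List Var
  | [] => []
  | d :: Γ => d.1 :: varsS' d.2 ++ varsC Γ

lemma mem_varsC_fst : ∀ {Γ : Ctx} {d : Var × Srt}, d ∈ Γ → d.1 ∈ varsC Γ := by
  intro Γ
  induction Γ with
  | nil => intro d hd; simp at hd
  | cons e Γ ih =>
    intro d hd
    rcases List.mem_cons.1 hd with rfl | hd
    · simp [varsC]
    · simp [varsC, ih hd]

lemma mem_varsC_snd : ∀ {Γ : Ctx} {d : Var × Srt}, d ∈ Γ → ∀ v ∈ varsS' d.2, v ∈ varsC Γ := by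
  intro Γ
  induction Γ with
  | nil => intro d hd; simp at hd
  | cons e Γ ih =>
    intro d hd v hv
    rcases List.mem_cons.1 hd with rfl | hd
    · simp [varsC, hv]
    · simp [varsC, ih hd v hv]

lemma substS_congr' (s : Srt) {σ σ' : Var → Var}
    (h : ∀ v ∈ varsS' s, σ v = σ' v) : substS σ s = substS σ' s := by
  cases s <;> simp_all [varsS', substS]

lemma substS_fixvars {s : Srt} {σ : Var → Var}
    (h : ∀ v ∈ varsS' s, σ v = v) : substS σ s = s := by
  cases s <;> simp_all [varsS', substS]

lemma substF_congr' (φ : Fml) : ∀ {σ σ' : Var → Var},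
    (∀ v ∈ varsF' φ, σ v = σ' v) → substF σ φ = substF σ' φ := by
  induction φ with
  | bot => intro σ σ' h; rfl
  | top => intro σ σ' h; rfl
  | and φ ψ ihφ ihψ =>
    intro σ σ' h
    simp only [substF]
    rw [ihφ (fun v hv => h v (by simp [varsF', hv])),
        ihψ (fun v hv => h v (by simp [varsF', hv]))]
  | or φ ψ ihφ ihψ =>
    intro σ σ' h
    simp only [substF]
    rw [ihφ (fun v hv => h v (by simp [varsF', hv])),
        ihψ (fun v hv => h v (by simp [varsF', hv]))]
  | imp φ ψ ihφ ihψ =>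
    intro σ σ' h
    simp only [substF]
    rw [ihφ (fun v hv => h v (by simp [varsF', hv])),
        ihψ (fun v hv => h v (by simp [varsF', hv]))]
  | all z s φ ih =>
    intro σ σ' h
    simp only [substF]
    rw [substS_congr' s (fun v hv => h v (by simp [varsF', hv]))]
    congr 1
    apply ih
    intro v hv
    rcases eq_or_ne v z with rfl | hvz
    · simp
    · simp only [Function.update_apply, if_neg hvz]
      exact h v (by simp [varsF', hv, hvz])
  | ex z s φ ih =>
    intro σ σ' h
    simp only [substF]
    rw [substS_congr' s (fun v hv => h v (by simp [varsF', hv]))]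
    congr 1
    apply ih
    intro v hv
    rcases eq_or_ne v z with rfl | hvz
    · simp
    · simp only [Function.update_apply, if_neg hvz]
      exact h v (by simp [varsF', hv, hvz])

lemma substS_fix {s : Srt} {σ τ : Var → Var}
    (h : ∀ v ∈ varsS' s, τ (σ v) = σ v) :
    substS τ (substS σ s) = substS σ s := by
  cases s <;> simp_all [varsS', substS]

lemma substF_fix (φ : Fml) : ∀ {σ τ : Var → Var},
    (∀ v ∈ varsF' φ, τ (σ v) = σ v) → substF τ (substF σ φ) = substF σ φ := by
  induction φ with
  | bot => intro σ τ h; rfl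
  | top => intro σ τ h; rfl
  | and φ ψ ihφ ihψ =>
    intro σ τ h
    simp only [substF]
    rw [ihφ (fun v hv => h v (by simp [varsF', hv])),
        ihψ (fun v hv => h v (by simp [varsF', hv]))]
  | or φ ψ ihφ ihψ =>
    intro σ τ h
    simp only [substF]
    rw [ihφ (fun v hv => h v (by simp [varsF', hv])),
        ihψ (fun v hv => h v (by simp [varsF', hv]))]
  | imp φ ψ ihφ ihψ =>
    intro σ τ h
    simp only [substF]
    rw [ihφ (fun v hv => h v (by simp [varsF', hv])),
        ihψ (fun v hv => h v (by simp [varsF', hv]))]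
  | all z s φ ih =>
    intro σ τ h
    simp only [substF]
    rw [substS_fix (fun v hv => h v (by simp [varsF', hv]))]
    congr 1
    apply ih
    intro v hv
    rcases eq_or_ne v z with rfl | hvz
    · simp [Function.update_apply]
    · simp only [Function.update_apply, if_neg hvz]
      rcases eq_or_ne (σ v) z with he | hne
      · simp [he]
      · simp only [if_neg hne]
        exact h v (by simp [varsF', hv, hvz])
  | ex z s φ ih =>
    intro σ τ h
    simp only [substF]
    rw [substS_fix (fun v hv => h v (by simp [varsF', hv]))]
    congr 1
    apply ih
    intro v hv
    rcases eq_or_ne v z with rfl | hvz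
    · simp [Function.update_apply]
    · simp only [Function.update_apply, if_neg hvz]
      rcases eq_or_ne (σ v) z with he | hne
      · simp [he]
      · simp only [if_neg hne]
        exact h v (by simp [varsF', hv, hvz])


def maxV (l : List ℕ) : ℕ := l.foldr max 0

lemma le_maxV (l : List ℕ) : ∀ v ∈ l, v ≤ maxV l := by
  induction l with
  | nil => simp
  | cons a l ih =>
    intro v hv
    rcases List.mem_cons.1 hv with rfl | hv
    · exact le_max_left _ _
    · exact le_trans (ih v hv) (le_max_right _ _)

lemma witness_seq (Γ₀ : Ctx) (z : Var) (s : Srt) :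
    Deriv (Γ₀ ++ [(z, s)]) .top (.ex z s .top) :=
  Deriv.exE Deriv.iden

lemma exMem {Γ : Ctx} {z w : Var} {s : Srt}
    (hΓ : CtxMor (fun v => if v = z then w else v) Γ (Γ ++ [(z, s)]))
    (hs : substS (fun v => if v = z then w else v) s = s) :
    Deriv Γ .top (.ex z s .top) := by
  have h := Deriv.sub hΓ (witness_seq Γ z s)
  simpa [substF, hs] using h

lemma ctx_entry_fix {Γ : Ctx} {σ : Var → Var} (hσ : ∀ v ∈ varsC Γ, σ v = v) :
    ∀ d ∈ Γ, (σ d.1, substS σ d.2) = d := by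
  intro d hd
  cases d with
  | mk a s =>
    simp only [Prod.mk.injEq]
    exact ⟨hσ a (mem_varsC_fst hd),
      substS_fixvars (fun v hv => hσ v (mem_varsC_snd hd v hv))⟩

/-- In `D≅`, the "substitution salva veritate" sequent is
derivable: for any formula `φ` in context `Γ, x : K`, the sequent
`Γ, x : K, y : K | (x ≅ y) ∧ φ ⇒ φ[y/x]` is derivable. -/
theorem substitution_salva_veritate (Γ : Ctx) (x y p : Var) (φ : Fml)
    (hxy : x ≠ y)
    (hx : x ∉ varsCon Γ) (hy : y ∉ varsCon Γ)
    (hφ : FWf (Γ ++ [(x, .K)]) φ) :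
    Deriv (Γ ++ [(x, .K), (y, .K)])
      (.and (isoF p x y) φ)
      (substF (fun v => if v = x then y else v) φ) := by
  classical
  set σ₁ : Var → Var := fun v => if v = x then y else v with hσ₁
  obtain ⟨p', p'', q2, q0, hfr, hord⟩ :
      ∃ p' p'' q2 q0 : Var,
        (∀ v ∈ (x :: y :: p :: (varsF' φ ++ varsC Γ)), v < p') ∧
        (p' < p'' ∧ p'' < q2 ∧ q2 < q0) :=
    by
    refine ⟨maxV (x :: y :: p :: (varsF' φ ++ varsC Γ)) + 1,
      maxV (x :: y :: p :: (varsF' φ ++ varsC Γ)) + 2,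
      maxV (x :: y :: p :: (varsF' φ ++ varsC Γ)) + 3,
      maxV (x :: y :: p :: (varsF' φ ++ varsC Γ)) + 4, ?_,
      Nat.lt_succ_self _, Nat.lt_succ_self _, Nat.lt_succ_self _⟩
    intro v hv
    exact Nat.lt_succ_of_le (le_maxV _ v hv)
  have hxM : x < p' := hfr x (by simp)
  have hyM : y < p' := hfr y (by simp)
  have hpM : p < p' := hfr p (by simp)
  have hφM : ∀ v ∈ varsF' φ, v < p' := fun v hv => hfr v (by simp [hv])
  have hΓM : ∀ v ∈ varsC Γ, v < p' := fun v hv => hfr v (by simp [hv])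
  have hxp' : x ≠ p' := Nat.ne_of_lt hxM
  have hxp'' : x ≠ p'' := Nat.ne_of_lt (lt_trans hxM hord.1)
  have hyp' : y ≠ p' := Nat.ne_of_lt hyM
  have hyp'' : y ≠ p'' := Nat.ne_of_lt (lt_trans hyM hord.1)
  have hpp'' : p ≠ p'' := Nat.ne_of_lt (lt_trans hpM hord.1)
  have hq2p' : q2 ≠ p' := (Nat.ne_of_lt (lt_trans hord.1 hord.2.1)).symm
  have hyx : y ≠ x := Ne.symm hxy
  have hp'φ : p' ∉ varsF' φ := fun hv => lt_irrefl _ (hφM _ hv)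
  -- key syntactic identities
  have e1 : substF (ctr x p' y q0) φ = substF σ₁ φ := by
    apply substF_congr'
    intro v hv
    have hvp' : v ≠ p' := fun h => hp'φ (h ▸ hv)
    rcases eq_or_ne v x with rfl | hvx
    · simp [ctr, hσ₁]
    · simp [ctr, hσ₁, hvx, hvp']
  have e2 : substF (ctr x p' y q0) (substF σ₁ φ) = substF σ₁ φ := by
    apply substF_fix
    intro v hv
    have hvp' : v ≠ p' := fun h => hp'φ (h ▸ hv)
    rcases eq_or_ne v x with rfl | hvx
    · simp [ctr, hσ₁, hyx, hyp']
    · simp [ctr, hσ₁, hvx, hvp']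
  -- main application of the J rule, from the side of y
  have prem1 : Deriv (Γ ++ [(y, .K), (q0, .iso y y)])
      (.and (rhoF 0 y q0) (substF (ctr x p' y q0) .top))
      (substF (ctr x p' y q0) (.imp φ (substF σ₁ φ))) := by
    have h1 : substF (ctr x p' y q0) (.imp φ (substF σ₁ φ))
        = .imp (substF σ₁ φ) (substF σ₁ φ) := by
      simp only [substF]
      rw [e1, e2]
    rw [h1]
    exact Deriv.impI (Deriv.andE2 Deriv.iden)
  have S0 : Deriv (Γ ++ [(y, .K), (x, .K), (p', .iso y x)]) .top
      (.imp φ (substF σ₁ φ)) :=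
    Deriv.jK (Γ := Γ) (θ := .top) (φ := .imp φ (substF σ₁ φ))
      (x := y) (y := x) (p := p') (q := q0) (r := 0) prem1
  have S1 : Deriv (Γ ++ [(y, .K), (x, .K)]) (.ex p' (.iso y x) .top)
      (.imp φ (substF σ₁ φ)) := by
    apply Deriv.exI
    rw [List.append_assoc]
    exact S0
  have S2 : Deriv (Γ ++ [(x, .K), (y, .K)]) (.ex p' (.iso y x) .top)
      (.imp φ (substF σ₁ φ)) :=
    Deriv.conExch (Γ := Γ) (Γ' := []) (x := y) (s := .K) (y := x) (s' := .K) S1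
  -- symmetry of ≅, again by the J rule
  have V : Deriv (Γ ++ [(x, .K), (q2, .iso x x)]) .top (.ex p' (.iso x x) .top) := by
    apply exMem (w := q2)
    · intro d hd
      simp only [List.mem_append, List.mem_cons, List.mem_singleton,
        List.not_mem_nil, or_false] at hd
      rcases hd with (hd | rfl | rfl) | rfl
      · rw [ctx_entry_fix (σ := fun v => if v = p' then q2 else v)
          (fun v hv => if_neg (Nat.ne_of_lt (hΓM v hv))) d hd]
        simp [hd]
      · simp [substS, hxp']
      · have hq2ne : q2 ≠ p' := hq2p'
        simp [substS, hxp', hq2ne]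
      · simp [substS, hxp']
    · simp [substS, hxp']
  have prem2 : Deriv (Γ ++ [(x, .K), (q2, .iso x x)])
      (.and (rhoF 0 x q2) (substF (ctr y p'' x q2) .top))
      (substF (ctr y p'' x q2) (.ex p' (.iso y x) .top)) := by
    have h2 : substF (ctr y p'' x q2) (.ex p' (.iso y x) .top)
        = .ex p' (.iso x x) .top := by
      simp [substF, substS, ctr, hxy, hxp'']
    rw [h2]
    exact Deriv.cut Deriv.top V
  have Tsym0 : Deriv (Γ ++ [(x, .K), (y, .K), (p'', .iso x y)]) .top
      (.ex p' (.iso y x) .top) :=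
    Deriv.jK (Γ := Γ) (θ := .top) (φ := .ex p' (.iso y x) .top)
      (x := x) (y := y) (p := p'') (q := q2) (r := 0) prem2
  have Tsym : Deriv (Γ ++ [(x, .K), (y, .K)]) (.ex p'' (.iso x y) .top)
      (.ex p' (.iso y x) .top) := by
    apply Deriv.exI
    rw [List.append_assoc]
    exact Tsym0
  -- renaming of the bound variable p to the fresh p''
  have R1w : Deriv ((Γ ++ [(x, .K), (y, .K)]) ++ [(p, .iso x y)]) .top
      (.ex p'' (.iso x y) .top) := by
    apply exMem (w := p)
    · intro d hd
      simp only [List.mem_append, List.mem_cons, List.mem_singleton,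
        List.not_mem_nil, or_false] at hd
      rcases hd with ((hd | rfl | rfl) | rfl) | rfl
      · rw [ctx_entry_fix (σ := fun v => if v = p'' then p else v)
          (fun v hv => if_neg (Nat.ne_of_lt (lt_trans (hΓM v hv) hord.1))) d hd]
        simp [hd]
      · simp [substS, hxp'']
      · simp [substS, hyp'']
      · simp [substS, hxp'', hyp'', hpp'']
      · simp [substS, hxp'', hyp'']
    · simp [substS, hxp'', hyp'']
  have R1 : Deriv (Γ ++ [(x, .K), (y, .K)]) (.ex p (.iso x y) .top)
      (.ex p'' (.iso x y) .top) := Deriv.exI R1w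
  have T : Deriv (Γ ++ [(x, .K), (y, .K)]) (.ex p (.iso x y) .top)
      (.ex p' (.iso y x) .top) := Deriv.cut R1 Tsym
  exact Deriv.cut
    (Deriv.andI (Deriv.cut (Deriv.andE1 Deriv.iden) T) (Deriv.andE2 Deriv.iden))
    (Deriv.impE S2)
end

section
/- In the deductive system D≅, the formula x ≅_K y, defined as ∃p : x ≅_K y. ⊤, is an equivalence relation: reflexivity, symmetry, and transitivity are all derivable sequents. -/
/-- Witness lemma: if some `(w, u ≅ v)` is in the context, then
`θ ⇒ ∃ b : u ≅ v. ⊤` is derivable, for any bound variable name `b`. -/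
lemma witIso (Γ : Ctx) (θ : Fml) (b u v w : Var) (h : (w, Srt.iso u v) ∈ Γ) :
    Deriv Γ θ (.ex b (.iso u v) .top) := by
  refine Deriv.cut Deriv.top ?_
  have base : Deriv ([] ++ [(b, Srt.iso (b+1) (b+2))]) .top
      (.ex b (.iso (b+1) (b+2)) .top) := Deriv.exE Deriv.iden
  set σ : Var → Var := fun t =>
    if t = b then w else if t = b+1 then u else if t = b+2 then v else t with hσ
  have hm : CtxMor σ Γ [(b, Srt.iso (b+1) (b+2))] := by
    intro d hd
    simp only [List.mem_singleton] at hd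
    subst hd
    have h1 : σ b = w := by simp [hσ]
    have h2 : σ (b+1) = u := by simp [hσ]
    have h3 : σ (b+2) = v := by simp [hσ]
    simpa [substS, h1, h2, h3] using h
  have hd := Deriv.sub hm base
  have e1 : substF σ (Fml.top) = .top := rfl
  have e2 : substF σ (Fml.ex b (.iso (b+1) (b+2)) .top)
      = .ex b (.iso u v) .top := by
    have h2 : σ (b+1) = u := by simp [hσ]
    have h3 : σ (b+2) = v := by simp [hσ]
    simp [substF, substS, h2, h3]
  rw [e1, e2] at hd
  exact hd

/-- Renaming the bound variable of a trivial existential over an iso sort. -/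
lemma exTopIso (Γ : Ctx) (a b u v : Var) :
    Deriv Γ (.ex a (.iso u v) .top) (.ex b (.iso u v) .top) :=
  Deriv.exI (witIso _ _ b u v a (by simp))

/-- In `D≅`, mere isomorphism `x ≅_K y` (the formula
`∃ p : x ≅_K y. ⊤`) is an equivalence relation: reflexivity, symmetry and
transitivity are all derivable sequents. -/
theorem mere_iso_equivalence (Γ : Ctx) (x y z p q r : Var)
    (hx : x ∉ varsCon Γ) (hy : y ∉ varsCon Γ) (hz : z ∉ varsCon Γ)
    (hxy : x ≠ y) (hyz : y ≠ z) (hxz : x ≠ z) :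
    -- reflexivity
    Deriv (Γ ++ [(x, .K)]) .top (isoF p x x) ∧
    -- symmetry
    Deriv (Γ ++ [(x, .K), (y, .K)]) (isoF p x y) (isoF q y x) ∧
    -- transitivity
    Deriv (Γ ++ [(x, .K), (y, .K), (z, .K)])
      (.and (isoF p x y) (isoF q y z)) (isoF r x z) := by
  refine ⟨?_, ?_, ?_⟩
  · -- reflexivity
    exact Deriv.cut (Deriv.rhoK (q := p) (r := 0)) Deriv.exTop
  · -- symmetry
    obtain ⟨P, hx2⟩ : ∃ P : Var, x ≠ P := ⟨x + y + 1, Nat.ne_of_lt (Nat.lt_succ_of_le (Nat.le_add_right x y))⟩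
    refine Deriv.cut (exTopIso _ p P x y) ?_
    refine Deriv.exI ?_
    have main : Deriv (Γ ++ [(x, .K), (y, .K), (P, .iso x y)]) .top (isoF q y x) := by
      apply Deriv.jK (q := 0) (r := 0)
      have hsub : substF (ctr y P x 0) (isoF q y x) = Fml.ex q (.iso x x) .top := by
        have hx1 : x ≠ y := hxy
        simp [isoF, substF, substS, ctr, hx1, hx2]
      have hsubt : substF (ctr y P x 0) (Fml.top) = Fml.top := rfl
      rw [hsub, hsubt]
      exact witIso _ _ q x x 0 (by simp)
    simpa using main
  · -- transitivity
    refine Deriv.impE ?_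
    obtain ⟨P, hx2, hz2⟩ : ∃ P : Var, x ≠ P ∧ z ≠ P := ⟨x + y + z + 1, Nat.ne_of_lt (Nat.lt_succ_of_le (Nat.le_trans (Nat.le_add_right x y) (Nat.le_add_right (x+y) z))), Nat.ne_of_lt (Nat.lt_succ_of_le (Nat.le_add_left z (x+y)))⟩
    refine Deriv.cut (exTopIso _ p P x y) ?_
    refine Deriv.exI ?_
    have main : Deriv ((Γ ++ [(z, .K)]) ++ [(x, .K), (y, .K), (P, .iso x y)]) .top
        (.imp (isoF q y z) (isoF r x z)) := by
      apply Deriv.jK (q := 0) (r := 0)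
      have hsub : substF (ctr y P x 0) (Fml.imp (isoF q y z) (isoF r x z))
          = Fml.imp (.ex q (.iso x z) .top) (.ex r (.iso x z) .top) := by
        have hx1 : x ≠ y := hxy
        have hz1 : z ≠ y := Ne.symm hyz
        simp [isoF, substF, substS, ctr, hx1, hx2, hz1, hz2]
      have hsubt : substF (ctr y P x 0) (Fml.top) = Fml.top := rfl
      rw [hsub, hsubt]
      exact Deriv.impI (Deriv.cut (Deriv.andE2 Deriv.iden) (exTopIso _ q r x z))
    -- move `(z, K)` to the right of the triple by two exchanges
    have e1 : Deriv (Γ ++ (x, Srt.K) :: (z, .K) :: [(y, .K), (P, .iso x y)]) .top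
        (.imp (isoF q y z) (isoF r x z)) := by
      apply Deriv.conExch (Γ := Γ)
      simpa using main
    have e2 : Deriv ((Γ ++ [(x, Srt.K)]) ++ (y, Srt.K) :: (z, .K) :: [(P, .iso x y)]) .top
        (.imp (isoF q y z) (isoF r x z)) := by
      apply Deriv.conExch (Γ := Γ ++ [(x, Srt.K)])
      simpa using e1
    simpa using e2
end
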